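/- Let M be a loopless matroid on a finite ground set E and let ω ∈ ℝ^E. Then there exists an M-ultrametric u* ∈ B̃(M) with u*_e ≤ ω_e for all e ∈ E, such that every M-ultrametric u ∈ B̃(M) with u_e ≤ ω_e for all e ∈ E satisfies u_e ≤ u*_e for all e ∈ E. (In particular, there is a componentwise greatest M-ultrametric below ω, called the subdominant M-ultrametric ω^M.) -/

import Mathlib

/-! When the ground set is everything, `ω` lies in the Bergman fan exactly when no element of a
circuit is a strict maximum of `ω` on it. If `e` is a strict maximum of a circuit `C` and `B` is a
minimum basis through `e`, some `f ∈ C \ {e}` is not spanned by `B \ {e}`, and swapping `e` for `f`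
gives a lighter basis. Conversely, an element `e` missing from a minimum basis `B` can be swapped in
for an element of its fundamental circuit in `B` that is at least as heavy.

This condition is closed and stable under pointwise maxima, and constants satisfy it since there are
no loops. So the members of the fan below `ω` form a nonempty, closed, directed set bounded above by
`ω`, and its supremum, the limit of the directed net of its members, belongs to it. -/

open scoped Classical

variable {α : Type*}

/-- The ω-weight of a set of elements: the sum of ω over the set. -/
noncomputable def wSum (ω : α → ℝ) (B : Set α) : ℝ := ∑ᶠ e ∈ B, ω e

/-- `B` is an ω-minimum basis of `M`: a basis whose ω-weight is minimum among all bases. -/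
def IsMinBase [Fintype α] (M : Matroid α) (ω : α → ℝ) (B : Set α) : Prop :=
  M.IsBase B ∧ ∀ B' : Set α, M.IsBase B' → wSum ω B ≤ wSum ω B'

/-- `ω` lies in the Bergman fan of `M`: every element lies in some ω-minimum basis. -/
def InBergmanFan [Fintype α] (M : Matroid α) (ω : α → ℝ) : Prop :=
  ∀ e : α, ∃ B : Set α, IsMinBase M ω B ∧ e ∈ B

/-- `C` is a circuit of `M`: a minimal dependent set. -/
def IsCircuit (M : Matroid α) (C : Set α) : Prop := Minimal M.Dep C

/-- A cocircuit of `M` is a circuit of the dual matroid `M✶`. -/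
def IsCocircuit (M : Matroid α) (C : Set α) : Prop := IsCircuit M✶ C

theorem IsClosed.isLUB_mem_of_directedOn {β : Type*} [Preorder β] [TopologicalSpace β]
    [SupConvergenceClass β] {s : Set β} {a : β} (hs : IsClosed s) (hne : s.Nonempty)
    (hdir : DirectedOn (· ≤ ·) s) (ha : IsLUB s a) : a ∈ s := by
  have := hne.to_subtype
  have := hdir.isDirectedOrder
  exact hs.mem_of_tendsto (SupConvergenceClass.tendsto_coe_atTop_isLUB a s ha)
    (Filter.Eventually.of_forall Subtype.prop)

lemma wSum_insert_sdiff_singleton (ω : α → ℝ) {B : Set α} {e f : α} (hB : B.Finite)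
    (he : e ∈ B) (hf : f ∉ B) :
    wSum ω (insert f (B \ {e})) = wSum ω B - ω e + ω f := by
  have hBe : B = insert e (B \ {e}) := by rw [Set.insert_sdiff_singleton, Set.insert_eq_of_mem he]
  have hB' : wSum ω B = ω e + wSum ω (B \ {e}) := by
    conv_lhs => rw [hBe]
    exact finsum_mem_insert ω (by simp) hB.sdiff
  rw [wSum, finsum_mem_insert ω (fun h => hf h.1) hB.sdiff, ← wSum, hB']
  ring

section MinBase

variable [Fintype α] {M : Matroid α} {ω : α → ℝ} {B : Set α} {e f : α}

lemma exists_isMinBase (M : Matroid α) (ω : α → ℝ) : ∃ B, IsMinBase M ω B := by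
  obtain ⟨B, hB, hmin⟩ := Set.exists_min_image {B | M.IsBase B} (wSum ω) (Set.toFinite _)
    M.exists_isBase
  exact ⟨B, hB, hmin⟩

lemma IsMinBase.le_of_exchange (hB : IsMinBase M ω B) (he : e ∈ B) (hf : f ∉ B)
    (hB' : M.IsBase (insert f (B \ {e}))) : ω e ≤ ω f := by
  have := hB.2 _ hB'
  rw [wSum_insert_sdiff_singleton ω B.toFinite he hf] at this
  linarith

lemma IsMinBase.exchange (hB : IsMinBase M ω B) (he : e ∈ B) (hf : f ∉ B)
    (hB' : M.IsBase (insert f (B \ {e}))) (hfe : ω f ≤ ω e) :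
    IsMinBase M ω (insert f (B \ {e})) := by
  refine ⟨hB', fun B'' hB'' => ?_⟩
  rw [wSum_insert_sdiff_singleton ω B.toFinite he hf]
  linarith [hB.2 B'' hB'']

end MinBase

def NoStrictMaxOnCircuits (M : Matroid α) (ω : α → ℝ) : Prop :=
  ∀ C, M.IsCircuit C → ∀ e ∈ C, ∃ f ∈ C, f ≠ e ∧ ω e ≤ ω f

section NoStrictMaxOnCircuits

variable {M : Matroid α} {ω u v : α → ℝ}

lemma NoStrictMaxOnCircuits.sup (hu : NoStrictMaxOnCircuits M u)
    (hv : NoStrictMaxOnCircuits M v) : NoStrictMaxOnCircuits M (u ⊔ v) := by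
  intro C hC e heC
  rcases le_total (v e) (u e) with h | h
  · obtain ⟨f, hfC, hfe, hef⟩ := hu C hC e heC
    exact ⟨f, hfC, hfe, (sup_le le_rfl h).trans (hef.trans le_sup_left)⟩
  · obtain ⟨f, hfC, hfe, hef⟩ := hv C hC e heC
    exact ⟨f, hfC, hfe, (sup_le h le_rfl).trans (hef.trans le_sup_right)⟩

lemma noStrictMaxOnCircuits_const (hloopless : ∀ e, M.Indep {e}) (c : ℝ) :
    NoStrictMaxOnCircuits M fun _ => c := by
  intro C hC e heC
  obtain ⟨f, hfC, hfe⟩ : ∃ f ∈ C, f ≠ e := by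
    by_contra! h
    exact hC.not_indep ((hloopless e).subset h)
  exact ⟨f, hfC, hfe, le_rfl⟩

lemma isClosed_setOf_noStrictMaxOnCircuits [Finite α] (M : Matroid α) :
    IsClosed {u : α → ℝ | NoStrictMaxOnCircuits M u} := by
  simp only [NoStrictMaxOnCircuits, Set.ofPred_forall, Set.ofPred_exists]
  refine isClosed_iInter fun C => isClosed_iInter fun _ => isClosed_iInter fun e =>
    isClosed_iInter fun _ => isClosed_iUnion_of_finite fun f => ?_
  by_cases hf : f ∈ C ∧ f ≠ e
  · simpa [hf] using isClosed_le (continuous_apply e) (continuous_apply f)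
  · convert isClosed_empty
    exact Set.eq_empty_of_forall_notMem fun u hu => hf ⟨hu.1, hu.2.1⟩

variable [Fintype α]

lemma InBergmanFan.noStrictMaxOnCircuits (h : InBergmanFan M ω) : NoStrictMaxOnCircuits M ω := by
  intro C hC e heC
  obtain ⟨B, hBmin, heB⟩ := h e
  have hecl : e ∉ M.closure (B \ {e}) := hBmin.1.indep.notMem_closure_sdiff_of_mem heB
  obtain ⟨f, ⟨hfC, hfe⟩, hfcl⟩ : ∃ f ∈ C \ {e}, f ∉ M.closure (B \ {e}) := by
    by_contra! hsub
    exact hecl (M.closure_subset_closure_of_subset_closure hsub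
      (hC.mem_closure_sdiff_singleton_of_mem heC))
  have hfB : f ∉ B := fun hfB =>
    hfcl (M.mem_closure_of_mem ⟨hfB, hfe⟩ (Set.sdiff_subset.trans hBmin.1.subset_ground))
  exact ⟨f, hfC, hfe, hBmin.le_of_exchange heB hfB
    (hBmin.1.exchange_base_of_notMem_closure heB hfcl (hC.subset_ground hfC))⟩

lemma NoStrictMaxOnCircuits.inBergmanFan (hE : M.E = Set.univ) (h : NoStrictMaxOnCircuits M ω) :
    InBergmanFan M ω := by
  intro e
  obtain ⟨B, hBmin⟩ := exists_isMinBase M ω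
  by_cases heB : e ∈ B
  · exact ⟨B, hBmin, heB⟩
  have heE : e ∈ M.E := hE ▸ Set.mem_univ e
  have hB := hBmin.1
  obtain ⟨f, hfC, hfe, hef⟩ := h _ (hB.fundCircuit_isCircuit heE heB) e (M.mem_fundCircuit e B)
  have hfB : f ∈ B := (M.fundCircuit_subset_insert e B hfC).resolve_left hfe
  have hind := (hB.indep.mem_fundCircuit_iff (hB.closure_eq ▸ heE) heB).1 hfC
  have hexch : M.IsBase (insert e (B \ {f})) := by
    rw [Set.insert_sdiff_singleton_comm hfe.symm]
    exact hB.exchange_isBase_of_indep' hfB heB hind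
  exact ⟨_, hBmin.exchange hfB heB hexch hef, Set.mem_insert e _⟩

lemma inBergmanFan_iff_noStrictMaxOnCircuits (hE : M.E = Set.univ) :
    InBergmanFan M ω ↔ NoStrictMaxOnCircuits M ω :=
  ⟨InBergmanFan.noStrictMaxOnCircuits, NoStrictMaxOnCircuits.inBergmanFan hE⟩

end NoStrictMaxOnCircuits

theorem stmt2_general [Fintype α] (M : Matroid α)
    (hloopless : ∀ e : α, M.Indep {e}) (ω : α → ℝ) :
    ∃ usub : α → ℝ, InBergmanFan M usub ∧ (∀ e, usub e ≤ ω e) ∧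
      ∀ u : α → ℝ, InBergmanFan M u → (∀ e, u e ≤ ω e) → ∀ e, u e ≤ usub e := by
  have hE : M.E = Set.univ := Set.eq_univ_of_forall fun e => (hloopless e).subset_ground rfl
  simp only [inBergmanFan_iff_noStrictMaxOnCircuits hE]
  set S := {u : α → ℝ | NoStrictMaxOnCircuits M u ∧ u ≤ ω}
  have hne : S.Nonempty :=
    ⟨fun _ => ⨅ e, ω e, noStrictMaxOnCircuits_const hloopless _,
      fun e => ciInf_le (Set.finite_range ω).bddBelow e⟩
  have hbdd : BddAbove S := ⟨ω, fun _ hu => hu.2⟩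
  have hsup : SupClosed S := fun _ hu _ hv => ⟨hu.1.sup hv.1, sup_le hu.2 hv.2⟩
  have hclosed : IsClosed S :=
    (isClosed_setOf_noStrictMaxOnCircuits M).inter (isClosed_le continuous_id continuous_const)
  obtain ⟨hcrit, hle⟩ :=
    hclosed.isLUB_mem_of_directedOn hne hsup.directedOn (isLUB_csSup hne hbdd)
  exact ⟨sSup S, hcrit, hle, fun u hu huω => le_csSup hbdd ⟨hu, huω⟩⟩

/-- For a loopless matroid M on a finite ground set and any ω ∈ ℝ^E,
there is a componentwise greatest M-ultrametric below ω (the subdominant M-ultrametric). -/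
theorem stmt2 [Fintype α] (M : Matroid α) (hE : M.E = Set.univ)
    (hloopless : ∀ e : α, M.Indep {e}) (ω : α → ℝ) :
    ∃ usub : α → ℝ, InBergmanFan M usub ∧ (∀ e, usub e ≤ ω e) ∧
      ∀ u : α → ℝ, InBergmanFan M u → (∀ e, u e ≤ ω e) → ∀ e, u e ≤ usub e :=
  stmt2_general M hloopless ω
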